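/- arXiv:1404.5837 — 3 statements merged into one kernel-verified Lean document; each statement's English description precedes it below -/
import Mathlib

section
/- Let φ be a nonnegative C_c^∞ function on ℝ supported in [-1/2,1/2], even (φ(w)=φ(-w)), with ∫_ℝ φ = 1, and set φ_ε(v) = ε⁻¹φ(v/ε). Let h₁, h₂ : ℝ → ℝ be bounded and uniformly continuous. Then for every u, û ∈ ℝ, lim_{ε→0⁺} ∫_ℝ h₁(v)·φ_ε(v−u)·(∫_ℝ h₂(w)·χ(w,û)·φ_ε(v−w) dw) dv = h₁(u)·h₂(u)·χ(u,û). -/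
open MeasureTheory Filter Set

/-- χ(v,u) = 1 if v < u, 1/2 if v = u, 0 if u < v. -/
noncomputable def chi (v u : ℝ) : ℝ := if v < u then 1 else if v = u then 1/2 else 0

lemma chi_nonneg (v u : ℝ) : 0 ≤ chi v u := by
  unfold chi; split_ifs <;> norm_num

lemma chi_le_one (v u : ℝ) : chi v u ≤ 1 := by
  unfold chi; split_ifs <;> norm_num

lemma chi_meas (u : ℝ) : Measurable fun v => chi v u := by
  unfold chi
  exact Measurable.ite (measurableSet_lt measurable_id measurable_const) measurable_const
    (Measurable.ite (measurableSet_eq_fun measurable_id measurable_const)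
      measurable_const measurable_const)

/-- Key quantitative lemma for fixed ε. -/
lemma key_est
    (φ : ℝ → ℝ) (hφc : Continuous φ)
    (hφ_supp : Function.support φ ⊆ Set.Icc (-(1/2)) (1/2))
    (hφ_nonneg : ∀ w, 0 ≤ φ w)
    (hφ_even : ∀ w, φ (-w) = φ w)
    (hφ_int : ∫ w, φ w = 1)
    (h₁ h₂ : ℝ → ℝ) (hm₁ : Measurable h₁) (hm₂ : Measurable h₂)
    (M₁ M₂ : ℝ) (hM₁ : ∀ v, |h₁ v| ≤ M₁) (hM₂ : ∀ v, |h₂ v| ≤ M₂)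
    (u uh : ℝ) (ε : ℝ) (hε : 0 < ε) (hsep : u ≠ uh → ε < |uh - u|)
    (η : ℝ) (hη : 0 ≤ η)
    (Hc : ∀ v w : ℝ, |v - u| ≤ ε → |w - u| ≤ ε → |h₁ v * h₂ w - h₁ u * h₂ u| ≤ η) :
    |(∫ v, h₁ v * (ε⁻¹ * φ ((v - u) / ε)) *
        ∫ w, h₂ w * chi w uh * (ε⁻¹ * φ ((v - w) / ε))) - h₁ u * h₂ u * chi u uh| ≤ η := by
  have hM₂0 : 0 ≤ M₂ := le_trans (abs_nonneg _) (hM₂ 0)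
  set g : ℝ → ℝ := fun t => ε⁻¹ * φ (t / ε) with hg
  have g_cont : Continuous g := continuous_const.mul (hφc.comp (continuous_id.div_const ε))
  have g_nonneg : ∀ t, 0 ≤ g t := fun t => mul_nonneg (by positivity) (hφ_nonneg _)
  have g_supp : ∀ t : ℝ, g t ≠ 0 → |t| ≤ ε / 2 := by
    intro t ht
    have hφt : φ (t / ε) ≠ 0 := by
      intro h; apply ht; simp [hg, h]
    have := hφ_supp hφt
    rw [Set.mem_Icc] at this
    have h1 := (le_div_iff₀ hε).mp this.1
    have h2 := (div_le_iff₀ hε).mp this.2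
    rw [abs_le]
    constructor <;> linarith
  have g_cs : HasCompactSupport g := by
    apply HasCompactSupport.of_support_subset_isCompact (isCompact_Icc (a := -(ε/2)) (b := ε/2))
    intro t ht
    have := g_supp t ht
    rw [abs_le] at this
    exact Set.mem_Icc.2 this
  have g_int : Integrable g := g_cont.integrable_of_hasCompactSupport g_cs
  have g_one : ∫ t, g t = 1 := by
    rw [hg]
    rw [integral_const_mul, Measure.integral_comp_div φ ε, hφ_int, abs_of_pos hε]
    rw [smul_eq_mul]
    field_simp
  have g_even : ∀ t, g (-t) = g t := by
    intro t
    simp only [hg]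
    rw [neg_div, hφ_even]
  have g_meas : Measurable g := g_cont.measurable
  -- translates
  have gt_int : ∀ c : ℝ, Integrable (fun t => g (c - t)) := fun c => g_int.comp_sub_left c
  have gt_int' : ∀ c : ℝ, Integrable (fun t => g (t - c)) := fun c => g_int.comp_sub_right c
  have sub_left : ∀ (F : ℝ → ℝ) (a : ℝ), ∫ t, F (a - t) = ∫ t, F t := by
    intro F a
    have e : (fun t : ℝ => F (a - t)) = fun t => F (a + (-t)) := by
      funext t; rw [sub_eq_add_neg]
    rw [e, integral_neg_eq_self (fun t => F (a + t)), integral_add_left_eq_self F a]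
  have gt_one : ∀ c : ℝ, ∫ t, g (c - t) = 1 := by
    intro c; rw [sub_left g c, g_one]
  -- Ψ
  set Ψ : ℝ → ℝ := fun s => ∫ t in Ioi s, g t with hΨ
  have Ψ_anti : Antitone Ψ := by
    intro s s' h
    exact setIntegral_mono_set g_int.integrableOn
      (Filter.Eventually.of_forall fun t => g_nonneg t)
      ((Ioi_subset_Ioi h).eventuallyLE)
  have Ψ_meas : Measurable Ψ := Ψ_anti.measurable
  have Ψ_nonneg : ∀ s, 0 ≤ Ψ s := fun s =>
    setIntegral_nonneg measurableSet_Ioi fun t _ => g_nonneg t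
  have Ψ_le_one : ∀ s, Ψ s ≤ 1 := by
    intro s
    rw [← g_one]
    exact setIntegral_le_integral g_int (Filter.Eventually.of_forall fun t => g_nonneg t)
  have Ψ_split : ∀ s : ℝ, (∫ t in Iic s, g t) + Ψ s = 1 := by
    intro s
    simp only [hΨ]
    rw [← g_one]
    exact intervalIntegral.integral_Iic_add_Ioi g_int.integrableOn g_int.integrableOn
  have Ψ_neg : ∀ t : ℝ, Ψ (-t) = 1 - Ψ t := by
    intro t
    have h1 : ∫ x in Iic (-t), g (-x) = ∫ x in Ioi t, g x := by
      simpa using integral_comp_neg_Iic (-t) g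
    have h2 : ∫ x in Iic (-t), g x = Ψ t := by
      simp only [hΨ]
      rw [← h1]
      exact setIntegral_congr_fun measurableSet_Iic fun x _ => (g_even x).symm
    have := Ψ_split (-t)
    linarith [this, h2]
  have Ψ_one : ∀ s : ℝ, s < -(ε/2) → Ψ s = 1 := by
    intro s hs
    have h0 : ∫ t in Iic s, g t = 0 := by
      apply setIntegral_eq_zero_of_forall_eq_zero
      intro t ht
      by_contra h
      have := g_supp t h
      rw [abs_le] at this
      rw [Set.mem_Iic] at ht
      linarith [this.1]
    linarith [Ψ_split s, h0]
  have Ψ_zero : ∀ s : ℝ, ε/2 < s → Ψ s = 0 := by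
    intro s hs
    apply setIntegral_eq_zero_of_forall_eq_zero
    intro t ht
    by_contra h
    have := g_supp t h
    rw [abs_le] at this
    rw [Set.mem_Ioi] at ht
    linarith [this.2]
  -- m identity
  have m_eq : ∀ v : ℝ, (∫ w, chi w uh * g (v - w)) = Ψ (v - uh) := by
    intro v
    have hae : (fun w => chi w uh * g (v - w)) =ᵐ[volume]
        (fun w => Set.indicator (Ioi (v - uh)) g (v - w)) := by
      have hne : ∀ᵐ w : ℝ, w ≠ uh := by
        have : volume ({uh} : Set ℝ) = 0 := Real.volume_singleton
        rw [MeasureTheory.ae_iff]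
        have hs : {w : ℝ | ¬ w ≠ uh} = {uh} := by ext w; simp
        rw [hs]; exact this
      filter_upwards [hne] with w hw
      rcases lt_trichotomy w uh with h | h | h
      · have h1 : chi w uh = 1 := by unfold chi; rw [if_pos h]
        have h2 : v - uh < v - w := by linarith
        rw [h1, Set.indicator_of_mem (Set.mem_Ioi.2 h2), one_mul]
      · exact absurd h hw
      · have h1 : chi w uh = 0 := by unfold chi; rw [if_neg (by linarith), if_neg (by linarith)]
        have h2 : ¬ (v - uh < v - w) := by linarith
        rw [h1, Set.indicator_of_notMem (fun hc => h2 (Set.mem_Ioi.1 hc)), zero_mul]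
    rw [integral_congr_ae hae]
    have hsub : (∫ w, Set.indicator (Ioi (v - uh)) g (v - w)) =
        ∫ w, Set.indicator (Ioi (v - uh)) g w := by
      exact sub_left (Set.indicator (Ioi (v - uh)) g) v
    rw [hsub, integral_indicator measurableSet_Ioi]
  -- inner integral n
  set H : ℝ → ℝ := fun w => h₂ w * chi w uh with hH
  have H_meas : Measurable H := hm₂.mul (chi_meas uh)
  have H_bound : ∀ w, |H w| ≤ M₂ := by
    intro w
    rw [hH, abs_mul]
    calc |h₂ w| * |chi w uh| ≤ M₂ * 1 := by
          apply mul_le_mul (hM₂ w) _ (abs_nonneg _) hM₂0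
          rw [abs_of_nonneg (chi_nonneg _ _)]; exact chi_le_one _ _
      _ = M₂ := mul_one M₂
  set n : ℝ → ℝ := fun v => ∫ w, H w * g (v - w) with hn
  have n_int : ∀ v, Integrable (fun w => H w * g (v - w)) := by
    intro v
    exact (gt_int v).bdd_mul (c := M₂) H_meas.aestronglyMeasurable (ae_of_all _ fun w => H_bound w)
  have chig_int : ∀ v, Integrable (fun w => chi w uh * g (v - w)) := by
    intro v
    exact (gt_int v).bdd_mul (c := 1) (chi_meas uh).aestronglyMeasurable
      (ae_of_all _ fun w => by rw [Real.norm_eq_abs, abs_of_nonneg (chi_nonneg _ _)]; exact chi_le_one _ _)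
  have n_meas : Measurable n := by
    have : StronglyMeasurable (Function.uncurry fun v w => H w * g (v - w)) := by
      apply Measurable.stronglyMeasurable
      exact (H_meas.comp measurable_snd).mul
        (g_meas.comp (measurable_fst.sub measurable_snd))
    exact (this.integral_prod_right).measurable
  have n_bound : ∀ v, |n v| ≤ M₂ := by
    intro v
    rw [hn]
    calc |∫ w, H w * g (v - w)| ≤ ∫ w, M₂ * g (v - w) := by
          rw [← Real.norm_eq_abs]
          apply norm_integral_le_of_norm_le ((gt_int v).const_mul M₂)
          filter_upwards with w
          rw [Real.norm_eq_abs, abs_mul, abs_of_nonneg (g_nonneg _)]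
          exact mul_le_mul_of_nonneg_right (H_bound w) (g_nonneg _)
      _ = M₂ := by rw [integral_const_mul, gt_one, mul_one]
  -- pointwise estimate
  set c : ℝ := h₁ u * h₂ u with hc
  have key_pt : ∀ v : ℝ, |v - u| ≤ ε / 2 → |h₁ v * n v - c * Ψ (v - uh)| ≤ η := by
    intro v hv
    rw [← m_eq v]
    have e1 : h₁ v * n v = ∫ w, h₁ v * (H w * g (v - w)) := by
      rw [hn, integral_const_mul]
    have e2 : c * ∫ w, chi w uh * g (v - w) = ∫ w, c * (chi w uh * g (v - w)) := by
      rw [integral_const_mul]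
    rw [e1, e2, ← integral_sub ((n_int v).const_mul _) ((chig_int v).const_mul _)]
    have e3 : (fun w => h₁ v * (H w * g (v - w)) - c * (chi w uh * g (v - w)))
        = fun w => (h₁ v * h₂ w - c) * (chi w uh * g (v - w)) := by
      funext w; rw [hH]; ring
    rw [e3]
    calc |∫ w, (h₁ v * h₂ w - c) * (chi w uh * g (v - w))|
        ≤ ∫ w, η * g (v - w) := by
          rw [← Real.norm_eq_abs]
          apply norm_integral_le_of_norm_le ((gt_int v).const_mul η)
          filter_upwards with w
          rw [Real.norm_eq_abs, abs_mul]
          by_cases hgw : g (v - w) = 0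
          · rw [hgw]; simp
          · have hwv : |v - w| ≤ ε / 2 := g_supp _ hgw
            have hwu : |w - u| ≤ ε := by
              have : w - u = (w - v) + (v - u) := by ring
              rw [this]
              calc |(w - v) + (v - u)| ≤ |w - v| + |v - u| := abs_add_le _ _
                _ ≤ ε / 2 + ε / 2 := add_le_add (by rwa [abs_sub_comm]) hv
                _ = ε := by ring
            have hA := Hc v w (le_trans hv (by linarith)) hwu
            have hB : |chi w uh * g (v - w)| ≤ g (v - w) := by
              rw [abs_mul, abs_of_nonneg (chi_nonneg _ _), abs_of_nonneg (g_nonneg _)]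
              exact mul_le_of_le_one_left (g_nonneg _) (chi_le_one _ _)
            exact mul_le_mul hA hB (abs_nonneg _) hη
      _ = η := by rw [integral_const_mul, gt_one, mul_one]
  -- main integrals
  have main_eq : (fun v => h₁ v * (ε⁻¹ * φ ((v - u) / ε)) *
      ∫ w, h₂ w * chi w uh * (ε⁻¹ * φ ((v - w) / ε)))
      = fun v => g (v - u) * (h₁ v * n v) := by
    funext v
    have : (∫ w, h₂ w * chi w uh * (ε⁻¹ * φ ((v - w) / ε))) = n v := by
      rfl
    rw [this]
    show h₁ v * g (v - u) * n v = _
    ring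
  rw [main_eq]
  have hM₁0 : 0 ≤ M₁ := le_trans (abs_nonneg _) (hM₁ 0)
  have gt_one' : ∀ a : ℝ, ∫ t, g (t - a) = 1 := by
    intro a; rw [integral_sub_right_eq_self g a, g_one]
  have int1 : Integrable (fun v => g (v - u) * (h₁ v * n v)) := by
    rw [show (fun v => g (v - u) * (h₁ v * n v)) = fun v => (h₁ v * n v) * g (v - u)
      from funext fun v => mul_comm _ _]
    apply (gt_int' u).bdd_mul (c := M₁ * M₂) (hm₁.mul n_meas).aestronglyMeasurable
    refine ae_of_all _ fun v => ?_
    rw [Real.norm_eq_abs, Pi.mul_apply, abs_mul]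
    exact mul_le_mul (hM₁ v) (n_bound v) (abs_nonneg _) hM₁0
  have ΨC_meas : Measurable fun v : ℝ => c * Ψ (v - uh) :=
    measurable_const.mul (Ψ_meas.comp (measurable_id.sub measurable_const))
  have int2 : Integrable (fun v => (c * Ψ (v - uh)) * g (v - u)) := by
    apply (gt_int' u).bdd_mul (c := |c|) ΨC_meas.aestronglyMeasurable
    refine ae_of_all _ fun v => ?_
    rw [Real.norm_eq_abs, abs_mul]
    calc |c| * |Ψ (v - uh)| ≤ |c| * 1 := by
          apply mul_le_mul_of_nonneg_left _ (abs_nonneg c)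
          rw [abs_of_nonneg (Ψ_nonneg _)]; exact Ψ_le_one _
      _ = |c| := mul_one _
  have gΨ_int : Integrable (fun t => Ψ t * g t) := by
    apply g_int.bdd_mul (c := 1) Ψ_meas.aestronglyMeasurable
    exact ae_of_all _ fun t => by rw [Real.norm_eq_abs, abs_of_nonneg (Ψ_nonneg t)]; exact Ψ_le_one t
  have L_eq : ∫ v, (c * Ψ (v - uh)) * g (v - u) = c * chi u uh := by
    rcases lt_trichotomy u uh with h | h | h
    · have hsep' : ε < uh - u := by
        have := hsep (ne_of_lt h)
        rwa [abs_of_pos (by linarith)] at this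
      have hchi : chi u uh = 1 := by unfold chi; rw [if_pos h]
      have hpt : ∀ v : ℝ, (c * Ψ (v - uh)) * g (v - u) = c * g (v - u) := by
        intro v
        by_cases hgv : g (v - u) = 0
        · rw [hgv, mul_zero, mul_zero]
        · have hvu := g_supp _ hgv
          rw [abs_le] at hvu
          have : v - uh < -(ε/2) := by linarith [hvu.2]
          rw [Ψ_one _ this, mul_one]
      rw [funext hpt, integral_const_mul, gt_one' u, mul_one, hchi, mul_one]
    · subst h
      have hchi : chi u u = 1/2 := by unfold chi; rw [if_neg (lt_irrefl u), if_pos rfl]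
      set A : ℝ := ∫ t, Ψ t * g t with hA
      have trans1 : ∫ v, (c * Ψ (v - u)) * g (v - u) = c * A := by
        rw [show (fun v => (c * Ψ (v - u)) * g (v - u))
            = fun v => c * (Ψ (v - u) * g (v - u)) from funext fun v => by ring]
        rw [integral_const_mul]
        congr 1
        rw [hA, ← integral_sub_right_eq_self (fun t => Ψ t * g t) u]
      have symm1 : A = 1 - A := by
        have e2 : A = ∫ t, Ψ (-t) * g (-t) := by
          rw [hA, ← integral_neg_eq_self (fun t => Ψ t * g t)]
        rw [show (fun t => Ψ (-t) * g (-t)) = fun t => g t - Ψ t * g t from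
          funext fun t => by rw [Ψ_neg t, g_even t]; ring] at e2
        rw [integral_sub g_int gΨ_int, g_one, ← hA] at e2
        exact e2
      have hA2 : A = 1/2 := by linarith
      rw [trans1, hA2, hchi]
    · have hsep' : ε < u - uh := by
        have := hsep (ne_of_gt h)
        rwa [abs_of_neg (by linarith), neg_sub] at this
      have hchi : chi u uh = 0 := by
        unfold chi; rw [if_neg (not_lt.2 (le_of_lt h)), if_neg (ne_of_gt h)]
      have hpt : ∀ v : ℝ, (c * Ψ (v - uh)) * g (v - u) = 0 := by
        intro v
        by_cases hgv : g (v - u) = 0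
        · rw [hgv, mul_zero]
        · have hvu := g_supp _ hgv
          rw [abs_le] at hvu
          have : ε/2 < v - uh := by linarith [hvu.1]
          rw [Ψ_zero _ this, mul_zero, zero_mul]
      rw [funext hpt, integral_zero, hchi, mul_zero]
  have split : (∫ v, g (v - u) * (h₁ v * n v)) - ∫ v, (c * Ψ (v - uh)) * g (v - u)
      = ∫ v, g (v - u) * (h₁ v * n v - c * Ψ (v - uh)) := by
    rw [← integral_sub int1 int2]
    congr 1; funext v; ring
  calc |(∫ v, g (v - u) * (h₁ v * n v)) - c * chi u uh|
      = |∫ v, g (v - u) * (h₁ v * n v - c * Ψ (v - uh))| := by rw [← L_eq, split]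
    _ ≤ ∫ v, η * g (v - u) := by
        rw [← Real.norm_eq_abs]
        apply norm_integral_le_of_norm_le ((gt_int' u).const_mul η)
        filter_upwards with v
        rw [Real.norm_eq_abs, abs_mul, abs_of_nonneg (g_nonneg _)]
        by_cases hgv : g (v - u) = 0
        · rw [hgv]; simp
        · have hvu := g_supp _ hgv
          calc g (v - u) * |h₁ v * n v - c * Ψ (v - uh)|
              ≤ g (v - u) * η := mul_le_mul_of_nonneg_left (key_pt v hvu) (g_nonneg _)
            _ = η * g (v - u) := mul_comm _ _
    _ = η := by rw [integral_const_mul, gt_one' u, mul_one]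

theorem stmt_0
    (φ : ℝ → ℝ) (hφ_smooth : ContDiff ℝ (⊤ : ℕ∞) φ)
    (hφ_supp : Function.support φ ⊆ Set.Icc (-(1/2)) (1/2))
    (hφ_nonneg : ∀ w, 0 ≤ φ w)
    (hφ_even : ∀ w, φ (-w) = φ w)
    (hφ_int : ∫ w, φ w = 1)
    (h₁ h₂ : ℝ → ℝ)
    (hb₁ : ∃ M, ∀ v, |h₁ v| ≤ M) (hu₁ : UniformContinuous h₁)
    (hb₂ : ∃ M, ∀ v, |h₂ v| ≤ M) (hu₂ : UniformContinuous h₂)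
    (u uh : ℝ) :
    Tendsto
      (fun ε : ℝ =>
        ∫ v, h₁ v * (ε⁻¹ * φ ((v - u) / ε)) *
          ∫ w, h₂ w * chi w uh * (ε⁻¹ * φ ((v - w) / ε)))
      (nhdsWithin 0 (Set.Ioi 0))
      (nhds (h₁ u * h₂ u * chi u uh)) := by
  obtain ⟨M₁, hM₁⟩ := hb₁
  obtain ⟨M₂, hM₂⟩ := hb₂
  have hM₁0 : 0 ≤ M₁ := le_trans (abs_nonneg _) (hM₁ 0)
  have hM₂0 : 0 ≤ M₂ := le_trans (abs_nonneg _) (hM₂ 0)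
  have hφc : Continuous φ := hφ_smooth.continuous
  have hm₁ : Measurable h₁ := hu₁.continuous.measurable
  have hm₂ : Measurable h₂ := hu₂.continuous.measurable
  rw [Metric.tendsto_nhdsWithin_nhds]
  intro η hη
  have hη4 : 0 < η / (4 * (M₁ + 1)) := by positivity
  have hη4' : 0 < η / (4 * (M₂ + 1)) := by positivity
  obtain ⟨d₁, hd₁, H₁⟩ := Metric.uniformContinuous_iff.1 hu₁ (η / (4 * (M₂ + 1))) hη4'
  obtain ⟨d₂, hd₂, H₂⟩ := Metric.uniformContinuous_iff.1 hu₂ (η / (4 * (M₁ + 1))) hη4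
  refine ⟨min (min d₁ d₂) (if u = uh then 1 else |uh - u|), ?_, ?_⟩
  · apply lt_min (lt_min hd₁ hd₂)
    split_ifs with h
    · norm_num
    · rw [abs_pos, sub_ne_zero]
      exact fun hc => h hc.symm
  · intro ε hε hdist
    have hε0 : 0 < ε := hε
    rw [Real.dist_eq, sub_zero, abs_of_pos hε0] at hdist
    have hεd₁ : ε < d₁ := lt_of_lt_of_le hdist (le_trans (min_le_left _ _) (min_le_left _ _))
    have hεd₂ : ε < d₂ := lt_of_lt_of_le hdist (le_trans (min_le_left _ _) (min_le_right _ _))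
    have hsep : u ≠ uh → ε < |uh - u| := by
      intro h
      have := lt_of_lt_of_le hdist (min_le_right _ _)
      rwa [if_neg h] at this
    have Hc : ∀ v w : ℝ, |v - u| ≤ ε → |w - u| ≤ ε →
        |h₁ v * h₂ w - h₁ u * h₂ u| ≤ η / 2 := by
      intro v w hv hw
      have h1 : |h₁ v - h₁ u| < η / (4 * (M₂ + 1)) := by
        have := H₁ (a := v) (b := u) (by rw [Real.dist_eq]; linarith [hv, hεd₁])
        rwa [Real.dist_eq] at this
      have h2 : |h₂ w - h₂ u| < η / (4 * (M₁ + 1)) := by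
        have := H₂ (a := w) (b := u) (by rw [Real.dist_eq]; linarith [hw, hεd₂])
        rwa [Real.dist_eq] at this
      have e14 : (M₁ + 1) * (η / (4 * (M₁ + 1))) = η / 4 := by
        field_simp
      have e24 : (η / (4 * (M₂ + 1))) * (M₂ + 1) = η / 4 := by
        field_simp
      calc |h₁ v * h₂ w - h₁ u * h₂ u|
          = |h₁ v * (h₂ w - h₂ u) + (h₁ v - h₁ u) * h₂ u| := by congr 1; ring
        _ ≤ |h₁ v * (h₂ w - h₂ u)| + |(h₁ v - h₁ u) * h₂ u| := abs_add_le _ _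
        _ = |h₁ v| * |h₂ w - h₂ u| + |h₁ v - h₁ u| * |h₂ u| := by rw [abs_mul, abs_mul]
        _ ≤ (M₁ + 1) * (η / (4 * (M₁ + 1))) + (η / (4 * (M₂ + 1))) * (M₂ + 1) := by
            apply add_le_add
            · exact mul_le_mul (by linarith [hM₁ v]) h2.le (abs_nonneg _) (by linarith)
            · exact mul_le_mul h1.le (by linarith [hM₂ u]) (abs_nonneg _) hη4'.le
        _ = η / 4 + η / 4 := by rw [e14, e24]
        _ = η / 2 := by ring
    have key := key_est φ hφc hφ_supp hφ_nonneg hφ_even hφ_int h₁ h₂ hm₁ hm₂ M₁ M₂ hM₁ hM₂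
      u uh ε hε0 hsep (η / 2) (by positivity) Hc
    rw [Real.dist_eq]
    exact lt_of_le_of_lt key (by linarith)
end

section
/- Let φ be a nonnegative C_c^∞ function on ℝ supported in [-1/2,1/2], even, with ∫_ℝ φ = 1, and set φ_ε(v) = ε⁻¹φ(v/ε). Let h₁ : ℝ → ℝ be bounded and uniformly continuous. Then for every u, û ∈ ℝ, lim_{ε→0⁺} ∫_ℝ ∫_ℝ h₁(v)·φ_ε(v−u)·χ(w,û)·φ_ε(v−w) dw dv = h₁(u)·χ(u,û). -/
open MeasureTheory Filter Set

noncomputable def Psi (φ : ℝ → ℝ) (s : ℝ) : ℝ := ∫ t in Ioi s, φ t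

section PsiLemmas

variable {φ : ℝ → ℝ} (hφc : Continuous φ)
  (hφ_supp : Function.support φ ⊆ Set.Icc (-(1/2)) (1/2))
  (hφ_nonneg : ∀ w, 0 ≤ φ w)
  (hφ_even : ∀ w, φ (-w) = φ w)
  (hφ_int : ∫ w, φ w = 1)

include hφc hφ_supp in
lemma hφ_integrable : Integrable φ := by
  have hcs : HasCompactSupport φ := HasCompactSupport.intro isCompact_Icc
    (fun x hx => by
      by_contra h
      exact hx (hφ_supp (Function.mem_support.mpr h)))
  exact hφc.integrable_of_hasCompactSupport hcs

include hφc hφ_supp hφ_nonneg in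
lemma Psi_antitone : Antitone (Psi φ) := by
  intro s s' h
  exact setIntegral_mono_set (hφ_integrable hφc hφ_supp).integrableOn
    (ae_of_all _ hφ_nonneg) (HasSubset.Subset.eventuallyLE (Ioi_subset_Ioi h))

include hφ_nonneg in
lemma Psi_nonneg (s : ℝ) : 0 ≤ Psi φ s :=
  setIntegral_nonneg measurableSet_Ioi (fun x _ => hφ_nonneg x)

include hφc hφ_supp hφ_nonneg hφ_int in
lemma Psi_le_one (s : ℝ) : Psi φ s ≤ 1 := by
  rw [← hφ_int]
  exact setIntegral_le_integral (hφ_integrable hφc hφ_supp) (ae_of_all _ hφ_nonneg)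

include hφ_supp in
lemma Psi_eq_zero {s : ℝ} (hs : 1/2 ≤ s) : Psi φ s = 0 := by
  rw [Psi]
  apply setIntegral_eq_zero_of_forall_eq_zero
  intro x hx
  by_contra h
  have := hφ_supp (Function.mem_support.mpr h)
  have : x ≤ 1/2 := this.2
  simp only [mem_Ioi] at hx
  linarith

include hφc hφ_supp hφ_int in
lemma Psi_eq_one {s : ℝ} (hs : s < -(1/2)) : Psi φ s = 1 := by
  have hint := hφ_integrable hφc hφ_supp
  have h0 : ∫ x in Iic s, φ x = 0 := by
    apply setIntegral_eq_zero_of_forall_eq_zero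
    intro x hx
    by_contra h
    have := (hφ_supp (Function.mem_support.mpr h)).1
    simp only [mem_Iic] at hx
    linarith
  have := intervalIntegral.integral_Iic_add_Ioi (μ := volume) (b := s) hint.integrableOn hint.integrableOn
  rw [h0, zero_add, hφ_int] at this
  exact this

include hφc hφ_supp hφ_even hφ_int in
lemma Psi_add_Psi_neg (s : ℝ) : Psi φ s + Psi φ (-s) = 1 := by
  have hint := hφ_integrable hφc hφ_supp
  have h1 : Psi φ (-s) = ∫ x in Iic s, φ x := by
    rw [Psi, ← integral_comp_neg_Iic s φ]
    exact integral_congr_ae (ae_of_all _ fun x => by simp only; rw [hφ_even])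
  rw [h1, add_comm]
  rw [← hφ_int]
  exact intervalIntegral.integral_Iic_add_Ioi hint.integrableOn hint.integrableOn

include hφc hφ_supp hφ_nonneg hφ_even hφ_int in
lemma integral_phi_mul_Psi : ∫ t, φ t * Psi φ t = 1/2 := by
  have hint := hφ_integrable hφc hφ_supp
  have hΨm : Measurable (Psi φ) := (Psi_antitone hφc hφ_supp hφ_nonneg).measurable
  have hmul : Integrable (fun t => φ t * Psi φ t) := by
    have := hint.bdd_mul (c := 1) (f := Psi φ)
      hΨm.aestronglyMeasurable
      (ae_of_all _ fun t => by
        rw [Real.norm_eq_abs, abs_of_nonneg (Psi_nonneg hφ_nonneg t)]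
        exact Psi_le_one hφc hφ_supp hφ_nonneg hφ_int t)
    simpa [mul_comm] using this
  have key : ∫ t, φ t * Psi φ t = ∫ t, φ t * (1 - Psi φ t) := by
    calc ∫ t, φ t * Psi φ t = ∫ t, φ (-t) * Psi φ (-t) := by
          exact (integral_neg_eq_self (fun t => φ t * Psi φ t) _).symm
      _ = ∫ t, φ t * (1 - Psi φ t) := by
          apply integral_congr_ae
          apply ae_of_all _
          intro t
          simp only [hφ_even]
          congr 1
          have := Psi_add_Psi_neg hφc hφ_supp hφ_even hφ_int t
          linarith
  have hsub : ∫ t, φ t * (1 - Psi φ t) = (∫ t, φ t) - ∫ t, φ t * Psi φ t := by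
    simp_rw [mul_sub, mul_one]
    exact integral_sub hint hmul
  rw [hsub, hφ_int] at key
  linarith

end PsiLemmas

lemma ae_ne_point (a : ℝ) : ∀ᵐ s : ℝ, s ≠ a := by
  rw [ae_iff]
  simp only [ne_eq, not_not, setOf_eq_eq_singleton]
  exact Real.volume_singleton

theorem stmt_4
    (φ : ℝ → ℝ) (hφ_smooth : ContDiff ℝ (⊤ : ℕ∞) φ)
    (hφ_supp : Function.support φ ⊆ Set.Icc (-(1/2)) (1/2))
    (hφ_nonneg : ∀ w, 0 ≤ φ w)
    (hφ_even : ∀ w, φ (-w) = φ w)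
    (hφ_int : ∫ w, φ w = 1)
    (h₁ : ℝ → ℝ)
    (hb₁ : ∃ M, ∀ v, |h₁ v| ≤ M) (hu₁ : UniformContinuous h₁)
    (u uh : ℝ) :
    Tendsto
      (fun ε : ℝ =>
        ∫ v, ∫ w, h₁ v * (ε⁻¹ * φ ((v - u) / ε)) * chi w uh * (ε⁻¹ * φ ((v - w) / ε)))
      (nhdsWithin 0 (Set.Ioi 0))
      (nhds (h₁ u * chi u uh)) := by
  have hφc : Continuous φ := hφ_smooth.continuous
  have hint : Integrable φ := hφ_integrable hφc hφ_supp
  have hΨm : Measurable (Psi φ) := (Psi_antitone hφc hφ_supp hφ_nonneg).measurable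
  have hΨ0 : ∀ s, 0 ≤ Psi φ s := Psi_nonneg hφ_nonneg
  have hΨ1 : ∀ s, Psi φ s ≤ 1 := Psi_le_one hφc hφ_supp hφ_nonneg hφ_int
  obtain ⟨M, hM⟩ := hb₁
  have hh₁c : Continuous h₁ := hu₁.continuous
  rw [Metric.tendsto_nhdsWithin_nhds]
  intro δ hδ
  obtain ⟨η₁, hη₁pos, hη₁⟩ := Metric.uniformContinuous_iff.mp hu₁ (δ/2) (by linarith)
  set η₂ : ℝ := if u = uh then 1 else |u - uh| with hη₂def
  have hη₂pos : 0 < η₂ := by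
    rw [hη₂def]; split
    · norm_num
    · rename_i h; exact abs_pos.mpr (sub_ne_zero.mpr h)
  refine ⟨min η₁ η₂, lt_min hη₁pos hη₂pos, ?_⟩
  intro ε hε hdist
  simp only [mem_Ioi] at hε
  rw [Real.dist_eq, sub_zero, abs_of_pos hε] at hdist
  have hεη₁ : ε < η₁ := lt_of_lt_of_le hdist (min_le_left _ _)
  have hεη₂ : ε < η₂ := lt_of_lt_of_le hdist (min_le_right _ _)
  have hεne : ε ≠ 0 := ne_of_gt hε
  set c : ℝ := (u - uh) / ε with hc
  -- Step A : inner integral evaluation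
  have stepA : ∀ v : ℝ,
      (∫ w, h₁ v * (ε⁻¹ * φ ((v - u) / ε)) * chi w uh * (ε⁻¹ * φ ((v - w) / ε)))
      = h₁ v * (ε⁻¹ * φ ((v - u) / ε)) * Psi φ ((v - uh) / ε) := by
    intro v
    have e1 : (fun w => h₁ v * (ε⁻¹ * φ ((v - u) / ε)) * chi w uh * (ε⁻¹ * φ ((v - w) / ε)))
        = fun w => (h₁ v * (ε⁻¹ * φ ((v - u) / ε))) * (chi w uh * (ε⁻¹ * φ ((v - w) / ε))) := by
      funext w; ring
    rw [e1, integral_const_mul]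
    congr 1
    calc (∫ w, chi w uh * (ε⁻¹ * φ ((v - w) / ε)))
        = ∫ x, chi (v - x) uh * (ε⁻¹ * φ (x / ε)) := by
          rw [← integral_sub_left_eq_self (fun x => chi (v - x) uh * (ε⁻¹ * φ (x / ε))) volume v]
          apply integral_congr_ae; apply ae_of_all; intro w
          simp only [sub_sub_cancel]
      _ = |ε| • ∫ s, chi (v - ε * s) uh * (ε⁻¹ * φ s) := by
          rw [← Measure.integral_comp_div (fun s => chi (v - ε * s) uh * (ε⁻¹ * φ s)) ε]
          apply integral_congr_ae; apply ae_of_all; intro x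
          simp only
          rw [mul_comm ε (x / ε), div_mul_cancel₀ _ hεne]
      _ = ∫ s, chi (v - ε * s) uh * φ s := by
          rw [abs_of_pos hε, smul_eq_mul, ← integral_const_mul]
          apply integral_congr_ae; apply ae_of_all; intro s
          simp only
          field_simp
      _ = ∫ s in Ioi ((v - uh) / ε), φ s := by
          rw [← integral_indicator measurableSet_Ioi]
          apply integral_congr_ae
          filter_upwards [ae_ne_point ((v - uh) / ε)] with s hs
          by_cases hlt : (v - uh) / ε < s
          · have h1 : v - ε * s < uh := by
              have := (div_lt_iff₀ hε).mp hlt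
              linarith
            simp [Set.indicator, mem_Ioi, hlt, chi, h1]
          · have hgt : s < (v - uh) / ε := lt_of_le_of_ne (not_lt.mp hlt) hs
            have h1 : uh < v - ε * s := by
              have := (lt_div_iff₀ hε).mp hgt
              linarith
            have h2 : ¬ (v - ε * s < uh) := by linarith
            have h3 : ¬ (v - ε * s = uh) := by intro h; rw [h] at h1; exact lt_irrefl _ h1
            simp [Set.indicator, mem_Ioi, hlt, chi, h2, h3]
      _ = Psi φ ((v - uh) / ε) := rfl
  -- Step B : outer substitution
  have horig : (∫ v, ∫ w, h₁ v * (ε⁻¹ * φ ((v - u) / ε)) * chi w uh * (ε⁻¹ * φ ((v - w) / ε)))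
      = ∫ s, h₁ (u + ε * s) * φ s * Psi φ (c + s) := by
    calc (∫ v, ∫ w, h₁ v * (ε⁻¹ * φ ((v - u) / ε)) * chi w uh * (ε⁻¹ * φ ((v - w) / ε)))
        = ∫ v, h₁ v * (ε⁻¹ * φ ((v - u) / ε)) * Psi φ ((v - uh) / ε) :=
          integral_congr_ae (ae_of_all _ fun v => stepA v)
      _ = ∫ x, h₁ (u + x) * (ε⁻¹ * φ (x / ε)) * Psi φ ((u + x - uh) / ε) := by
          rw [← integral_add_left_eq_self
            (fun v => h₁ v * (ε⁻¹ * φ ((v - u) / ε)) * Psi φ ((v - uh) / ε)) u]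
          apply integral_congr_ae; apply ae_of_all; intro x
          simp only [add_sub_cancel_left]
      _ = |ε| • ∫ s, h₁ (u + ε * s) * (ε⁻¹ * φ s) * Psi φ (c + s) := by
          rw [← Measure.integral_comp_div (fun s => h₁ (u + ε * s) * (ε⁻¹ * φ s) * Psi φ (c + s)) ε]
          apply integral_congr_ae; apply ae_of_all; intro x
          simp only
          rw [mul_comm ε (x / ε), div_mul_cancel₀ _ hεne]
          congr 2
          rw [hc]
          field_simp
          ring
      _ = ∫ s, h₁ (u + ε * s) * φ s * Psi φ (c + s) := by
          rw [abs_of_pos hε, smul_eq_mul, ← integral_const_mul]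
          apply integral_congr_ae; apply ae_of_all; intro s
          simp only
          field_simp
  -- Step C : the key constant integral
  have hkey : ∫ s, φ s * Psi φ (c + s) = chi u uh := by
    rcases lt_trichotomy u uh with hlt | heq | hgt
    · have hchi : chi u uh = 1 := by simp [chi, hlt]
      have hη₂' : η₂ = uh - u := by
        rw [hη₂def, if_neg (ne_of_lt hlt), abs_of_neg (by linarith : u - uh < 0)]; ring
      have hcc : c < -1 := by
        rw [hc, div_lt_iff₀ hε]
        rw [hη₂'] at hεη₂
        linarith
      have : ∀ s, φ s * Psi φ (c + s) = φ s := by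
        intro s
        by_cases hφs : φ s = 0
        · simp [hφs]
        · have hmem := hφ_supp (Function.mem_support.mpr hφs)
          have hs2 : s ≤ 1/2 := hmem.2
          have : Psi φ (c + s) = 1 := Psi_eq_one hφc hφ_supp hφ_int (by linarith)
          rw [this, mul_one]
      rw [hchi]
      calc ∫ s, φ s * Psi φ (c + s) = ∫ s, φ s :=
            integral_congr_ae (ae_of_all _ fun s => this s)
        _ = 1 := hφ_int
    · have hchi : chi u uh = 1/2 := by simp [chi, heq]
      have hc0 : c = 0 := by rw [hc, heq]; simp
      rw [hchi, hc0]
      simp only [zero_add]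
      exact integral_phi_mul_Psi hφc hφ_supp hφ_nonneg hφ_even hφ_int
    · have hchi : chi u uh = 0 := by
        have hne : ¬ u = uh := by intro h; rw [h] at hgt; exact lt_irrefl _ hgt
        simp only [chi, if_neg (not_lt.mpr (le_of_lt hgt)), if_neg hne]
      have hη₂' : η₂ = u - uh := by
        rw [hη₂def, if_neg (ne_of_gt hgt), abs_of_pos (by linarith : 0 < u - uh)]
      have hcc : 1 < c := by
        rw [hc, lt_div_iff₀ hε]
        rw [hη₂'] at hεη₂
        linarith
      have : ∀ s, φ s * Psi φ (c + s) = 0 := by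
        intro s
        by_cases hφs : φ s = 0
        · simp [hφs]
        · have hmem := hφ_supp (Function.mem_support.mpr hφs)
          have hs1 : -(1/2) ≤ s := hmem.1
          have : Psi φ (c + s) = 0 := Psi_eq_zero hφ_supp (by linarith)
          rw [this, mul_zero]
      rw [hchi]
      calc ∫ s, φ s * Psi φ (c + s) = ∫ s, (0:ℝ) :=
            integral_congr_ae (ae_of_all _ fun s => this s)
        _ = 0 := integral_zero _ _
  -- integrability
  have hmeasq : AEStronglyMeasurable (fun s => h₁ (u + ε * s) * φ s * Psi φ (c + s)) volume := by
    have m1 : Measurable fun s : ℝ => h₁ (u + ε * s) :=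
      (hh₁c.comp (by continuity : Continuous fun s : ℝ => u + ε * s)).measurable
    have m2 : Measurable fun s : ℝ => Psi φ (c + s) :=
      hΨm.comp (measurable_const.add measurable_id)
    exact ((m1.mul hφc.measurable).mul m2).aestronglyMeasurable
  have hq : Integrable (fun s => h₁ (u + ε * s) * φ s * Psi φ (c + s)) := by
    refine Integrable.mono' (hint.const_mul M) hmeasq (ae_of_all _ fun s => ?_)
    rw [Real.norm_eq_abs, abs_mul, abs_mul, abs_of_nonneg (hφ_nonneg s),
      abs_of_nonneg (hΨ0 (c + s))]
    have h1 := hM (u + ε * s)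
    have h2 := hΨ0 (c + s)
    have h3 := hΨ1 (c + s)
    have h4 := hφ_nonneg s
    have hM0 : 0 ≤ M := le_trans (abs_nonneg _) (hM 0)
    have hint1 : |h₁ (u + ε * s)| * φ s * Psi φ (c + s) ≤ M * φ s * Psi φ (c + s) :=
      mul_le_mul_of_nonneg_right (mul_le_mul_of_nonneg_right h1 h4) h2
    have hint2 : M * φ s * Psi φ (c + s) ≤ M * φ s := by
      nlinarith [mul_nonneg (mul_nonneg hM0 h4) (sub_nonneg.mpr h3)]
    linarith
  have hPsiInt : Integrable (fun s => φ s * Psi φ (c + s)) := by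
    have m2 : Measurable fun s : ℝ => Psi φ (c + s) :=
      hΨm.comp (measurable_const.add measurable_id)
    have := hint.bdd_mul (c := 1) (f := fun s => Psi φ (c + s))
      m2.aestronglyMeasurable
      (ae_of_all _ fun s => by
        rw [Real.norm_eq_abs, abs_of_nonneg (hΨ0 (c + s))]; exact hΨ1 (c + s))
    simpa [mul_comm] using this
  have hq2 : Integrable (fun s => h₁ u * (φ s * Psi φ (c + s))) := hPsiInt.const_mul _
  -- final estimate
  have hL : ∫ s, h₁ u * (φ s * Psi φ (c + s)) = h₁ u * chi u uh := by
    rw [integral_const_mul, hkey]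
  rw [Real.dist_eq, horig, ← hL, ← integral_sub hq hq2]
  have hptw : ∀ s, |h₁ (u + ε * s) * φ s * Psi φ (c + s) - h₁ u * (φ s * Psi φ (c + s))|
      ≤ δ/2 * φ s := by
    intro s
    have hrw : h₁ (u + ε * s) * φ s * Psi φ (c + s) - h₁ u * (φ s * Psi φ (c + s))
        = (h₁ (u + ε * s) - h₁ u) * (φ s * Psi φ (c + s)) := by ring
    rw [hrw, abs_mul, abs_of_nonneg (mul_nonneg (hφ_nonneg s) (hΨ0 (c + s)))]
    by_cases hφs : φ s = 0
    · rw [hφs]; simp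
    · have hmem := hφ_supp (Function.mem_support.mpr hφs)
      have hsabs : |s| ≤ 1/2 := abs_le.mpr ⟨hmem.1, hmem.2⟩
      have hdist' : dist (u + ε * s) u < η₁ := by
        rw [Real.dist_eq, add_sub_cancel_left, abs_mul, abs_of_pos hε]
        calc ε * |s| ≤ ε * (1/2) := by
              apply mul_le_mul_of_nonneg_left hsabs (le_of_lt hε)
          _ < η₁ := by linarith
      have hd := le_of_lt (hη₁ hdist')
      rw [Real.dist_eq] at hd
      have h2 := hΨ0 (c + s)
      have h3 := hΨ1 (c + s)
      have h4 := hφ_nonneg s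
      have hint1 : |h₁ (u + ε * s) - h₁ u| * (φ s * Psi φ (c + s))
          ≤ (δ/2) * (φ s * Psi φ (c + s)) :=
        mul_le_mul_of_nonneg_right hd (mul_nonneg h4 h2)
      have hint2 : (δ/2) * (φ s * Psi φ (c + s)) ≤ δ/2 * φ s := by
        nlinarith [mul_nonneg (by linarith : (0:ℝ) ≤ δ/2) (mul_nonneg h4 (sub_nonneg.mpr h3))]
      linarith
  calc |∫ s, (h₁ (u + ε * s) * φ s * Psi φ (c + s) - h₁ u * (φ s * Psi φ (c + s)))|
      ≤ ∫ s, |h₁ (u + ε * s) * φ s * Psi φ (c + s) - h₁ u * (φ s * Psi φ (c + s))| := by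
        simpa [Real.norm_eq_abs] using norm_integral_le_integral_norm
          (fun s => h₁ (u + ε * s) * φ s * Psi φ (c + s) - h₁ u * (φ s * Psi φ (c + s)))
    _ ≤ ∫ s, δ/2 * φ s := integral_mono (hq.sub hq2).abs (hint.const_mul _) hptw
    _ = δ/2 := by rw [integral_const_mul, hφ_int, mul_one]
    _ < δ := by linarith
end

section
/- Let F, G : ℝⁿ × ℝ → ℝ be measurable, let g₁, g₂ ∈ L¹(ℝⁿ) be nonnegative, and let ω : [0,∞) → [0,∞) be nondecreasing with ω(t) → 0 as t → 0⁺. Assume: (a) for every v ∈ ℝ, F(·,v) and G(·,v) are in L¹(ℝⁿ); (b) for Lebesgue-a.e. x ∈ ℝⁿ and all u, w ∈ ℝ, |F(x,u) − F(x,w)| ≤ g₁(x)·|u−w| and |G(x,u) − G(x,w)| ≤ g₂(x)·ω(|u−w|); (c) for every ball B ⊂ ℝⁿ, the map v ↦ ∫_B F(x,v) dx is differentiable at every v with derivative ∫_B G(x,v) dx. Then there exists a Lebesgue-null set C ⊂ ℝⁿ such that for every x ∉ C and every v ∈ ℝ the limits F̃(x,v) := lim_{r→0⁺} (1/|B_r(x)|)∫_{B_r(x)}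 F(y,v) dy and G̃(x,v) := lim_{r→0⁺} (1/|B_r(x)|)∫_{B_r(x)} G(y,v) dy exist, and for every x ∉ C the map v ↦ F̃(x,v) is continuously differentiable on ℝ with derivative v ↦ G̃(x,v). -/
/-!
Fubini's theorem and the fundamental theorem of calculus for `v ↦ ∫_B F(·, v)` give
`∫_B (F(·, v) - F(·, 0)) = ∫_B ∫_0^v G(·, t) dt` on every ball `B`, so by Lebesgue differentiation
`F(x, v) - F(x, 0) = ∫_0^v G(x, t) dt` for a.e. `x`, simultaneously for all rational `v`.
Off a null set, `x` is moreover a Lebesgue point of `g₁`, `g₂` and of every `F(·, q)`, `G(·, q)`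
with `q` rational. The ball averages of `F(·, v)` and `G(·, v)` inherit the moduli of continuity
in `v` of `F` and `G`, with `g₁`, `g₂` replaced by their averages, which converge; this extends
both the convergence of the averages and the integral identity from rational to all `v`. Hence
`F̃ = F` and `G̃ = G` at such `x`.
-/

open MeasureTheory Filter Set Metric Topology
open scoped Interval

theorem continuous_of_abs_sub_le_mul {f : ℝ → ℝ} {c : ℝ} {ρ : ℝ → ℝ}
    (hρ : Tendsto ρ (𝓝[>] 0) (𝓝 0))
    (hf : ∀ u w, |f u - f w| ≤ c * ρ |u - w|) : Continuous f := by
  refine continuous_iff_continuousAt.2 fun v => continuousWithinAt_compl_self.1 ?_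
  have hlim : Tendsto (fun u => c * ρ |u - v|) (𝓝[≠] v) (𝓝 0) := by
    simpa using (hρ.comp (tendsto_norm_sub_self_nhdsNE v)).const_mul c
  exact tendsto_iff_norm_sub_tendsto_zero.2
    (squeeze_zero (fun _ => norm_nonneg _) (fun u => hf u v) hlim)

theorem tendsto_of_tendsto_rat_of_abs_sub_le_mul {ι : Type*} {l : Filter ι} {A : ι → ℝ → ℝ}
    {f : ℝ → ℝ} {L : ι → ℝ} {L₀ : ℝ} {ρ : ℝ → ℝ} (hρ : Tendsto ρ (𝓝[>] 0) (𝓝 0))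
    (hρ₀ : ∀ t, 0 ≤ t → 0 ≤ ρ t) (hL : Tendsto L l (𝓝 L₀))
    (hA : ∀ i u w, |A i u - A i w| ≤ L i * ρ |u - w|) (hf : ∀ u w, |f u - f w| ≤ L₀ * ρ |u - w|)
    (hq : ∀ q : ℚ, Tendsto (fun i => A i q) l (𝓝 (f q))) (v : ℝ) :
    Tendsto (fun i => A i v) l (𝓝 (f v)) := by
  rw [Metric.tendsto_nhds]
  intro ε hε
  set M := |L₀| + 1
  have hM : 0 < M := by positivity
  obtain ⟨δ, hδ, hρδ⟩ := mem_nhdsGT_iff_exists_Ioo_subset.1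
    (hρ (Iio_mem_nhds (show (0 : ℝ) < ε / (3 * M) by positivity)))
  obtain ⟨q, hvq, hqδ⟩ := exists_rat_btwn (lt_add_of_pos_right v (sub_pos.2 hδ))
  have hdist : |v - q| ∈ Ioo 0 δ := by
    rw [abs_sub_comm, abs_of_pos (sub_pos.2 hvq)]
    constructor <;> linarith
  have hρq : M * ρ |v - q| < ε / 3 := by
    have := hρδ hdist
    rw [mem_preimage, mem_Iio, lt_div_iff₀ (by positivity)] at this
    linarith
  have hρq₀ : 0 ≤ ρ |v - q| := hρ₀ _ (abs_nonneg _)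
  filter_upwards [hL.eventually (gt_mem_nhds (show L₀ < M by linarith [le_abs_self L₀])),
    Metric.tendsto_nhds.1 (hq q) (ε / 3) (by positivity)] with i hLi hAq
  rw [Real.dist_eq] at hAq ⊢
  have h₁ : |A i v - A i q| ≤ M * ρ |v - q| :=
    (hA i v q).trans (mul_le_mul_of_nonneg_right hLi.le hρq₀)
  have h₂ : |f q - f v| ≤ M * ρ |v - q| := by
    have hfq := hf q v
    rw [abs_sub_comm (q : ℝ) v] at hfq
    exact hfq.trans (mul_le_mul_of_nonneg_right (by linarith [le_abs_self L₀]) hρq₀)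
  calc |A i v - f v| ≤ |A i v - A i q| + |A i q - f q| + |f q - f v| := by
          linarith [abs_sub_le (A i v) (A i q) (f v), abs_sub_le (A i q) (f q) (f v)]
    _ < ε := by linarith

theorem hasDerivAt_of_sub_eq_intervalIntegral_rat {f g : ℝ → ℝ} (hf : Continuous f)
    (hg : Continuous g) (h : ∀ q : ℚ, f q - f 0 = ∫ t in (0 : ℝ)..q, g t) (v : ℝ) :
    HasDerivAt f (g v) v := by
  have hprimitive : f = fun u => f 0 + ∫ t in (0 : ℝ)..u, g t := by
    refine Continuous.ext_on Rat.denseRange_cast hf (continuous_const.add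
      (intervalIntegral.continuous_primitive (fun _ _ => hg.intervalIntegrable _ _) 0)) ?_
    rintro _ ⟨q, rfl⟩
    simp [← h q]
  rw [hprimitive]
  exact ((hg.integral_hasStrictDerivAt 0 v).hasDerivAt.const_add _)

theorem abs_average_sub_le_average_mul {α : Type*} [MeasurableSpace α] {μ : Measure α}
    {f : α → ℝ → ℝ} {g : α → ℝ} {ρ : ℝ → ℝ} {u w : ℝ} (hfu : Integrable (f · u) μ)
    (hfw : Integrable (f · w) μ) (hg : Integrable g μ)
    (hmod : ∀ᵐ x ∂μ, |f x u - f x w| ≤ g x * ρ |u - w|) :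
    |⨍ x, f x u ∂μ - ⨍ x, f x w ∂μ| ≤ (⨍ x, g x ∂μ) * ρ |u - w| := by
  simp only [average_eq, smul_eq_mul, ← mul_sub, abs_mul, mul_assoc, ← integral_mul_const,
    ← integral_sub hfu hfw, abs_inv, abs_of_nonneg measureReal_nonneg]
  gcongr
  exact abs_integral_le_integral_abs.trans
    (integral_mono_ae (hfu.sub hfw).abs (hg.mul_const _) hmod)

section Fubini

variable {α : Type*} [MeasurableSpace α] {μ : Measure α} [SFinite μ]

theorem integrable_uncurry_uIoc_of_ae_bound {G : α → ℝ → ℝ}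
    (hG : Measurable (Function.uncurry G)) {a b : ℝ} {c : α → ℝ} (hc : Integrable c μ)
    (hbound : ∀ᵐ x ∂μ, ∀ t ∈ Ι a b, |G x t| ≤ c x) :
    Integrable (fun p : ℝ × α => G p.2 p.1) ((volume.restrict (Ι a b)).prod μ) := by
  have : IsFiniteMeasure (volume.restrict (Ι a b)) := by rw [uIoc]; infer_instance
  refine (hc.comp_snd _).mono' (hG.comp measurable_swap).aestronglyMeasurable ?_
  have ht : ∀ᵐ p ∂(volume.restrict (Ι a b)).prod μ, p.1 ∈ Ι a b :=
    Measure.quasiMeasurePreserving_fst.ae (ae_restrict_mem measurableSet_uIoc)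
  filter_upwards [ht, Measure.quasiMeasurePreserving_snd.ae hbound] with p hp1 hp2
  exact hp2 p.1 hp1

theorem integrable_intervalIntegral_of_integrable_uncurry {G : α → ℝ → ℝ} {a b : ℝ}
    (hG : Integrable (fun p : ℝ × α => G p.2 p.1) ((volume.restrict (Ι a b)).prod μ)) :
    Integrable (fun x => ∫ t in a..b, G x t) μ := by
  simp_rw [intervalIntegral.intervalIntegral_eq_integral_uIoc]
  exact hG.integral_prod_right.smul (if a ≤ b then (1 : ℝ) else -1)

theorem integral_intervalIntegral_eq_sub_of_hasDerivAt {F G : α → ℝ → ℝ} {a b : ℝ}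
    (hG : Integrable (fun p : ℝ × α => G p.2 p.1) ((volume.restrict (Ι a b)).prod μ))
    (hderiv : ∀ t ∈ [[a, b]], HasDerivAt (fun v => ∫ x, F x v ∂μ) (∫ x, G x t ∂μ) t) :
    ∫ x, (∫ t in a..b, G x t) ∂μ = ∫ x, F x b ∂μ - ∫ x, F x a ∂μ := by
  rw [← intervalIntegral_integral_swap hG]
  exact intervalIntegral.integral_eq_sub_of_hasDerivAt hderiv
    (intervalIntegrable_iff.2 hG.integral_prod_left)

end Fubini

section BallAverages

variable {E : Type*} [NormedAddCommGroup E] [NormedSpace ℝ E] [FiniteDimensional ℝ E]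
  [MeasurableSpace E] [BorelSpace E] (μ : Measure E) [μ.IsAddHaarMeasure]

theorem ball_ae_eq_closedBall (x : E) {r : ℝ} (hr : r ≠ 0) : ball x r =ᵐ[μ] closedBall x r := by
  refine ae_eq_of_subset_of_measure_ge ball_subset_closedBall ?_
    measurableSet_ball.nullMeasurableSet measure_closedBall_lt_top.ne
  calc μ (closedBall x r) = μ (ball x r ∪ sphere x r) := by rw [ball_union_sphere]
    _ ≤ μ (ball x r) + μ (sphere x r) := measure_union_le _ _
    _ = μ (ball x r) := by rw [Measure.addHaar_sphere_of_ne_zero μ x hr, add_zero]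

theorem ae_tendsto_setAverage_ball {V : Type*} [NormedAddCommGroup V] [NormedSpace ℝ V]
    [CompleteSpace V] {f : E → V} (hf : LocallyIntegrable f μ) :
    ∀ᵐ x ∂μ, Tendsto (fun r => ⨍ y in ball x r, f y ∂μ) (𝓝[>] 0) (𝓝 (f x)) := by
  filter_upwards [IsUnifLocDoublingMeasure.ae_tendsto_average μ hf 1] with x hx
  have hpos : ∀ᶠ r in 𝓝[>] (0 : ℝ), 0 < r := self_mem_nhdsWithin
  refine (hx (fun _ => x) id tendsto_id ?_).congr' ?_
  · filter_upwards [hpos] with r hr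
    simpa using hr.le
  · filter_upwards [hpos] with r hr
    rw [id, Measure.restrict_congr_set (ball_ae_eq_closedBall μ x hr.ne')]

theorem ae_eq_of_forall_setIntegral_ball_eq {V : Type*} [NormedAddCommGroup V]
    [NormedSpace ℝ V] [CompleteSpace V] {f g : E → V} (hf : LocallyIntegrable f μ)
    (hg : LocallyIntegrable g μ)
    (h : ∀ x r, 0 < r → ∫ y in ball x r, f y ∂μ = ∫ y in ball x r, g y ∂μ) : f =ᵐ[μ] g := by
  filter_upwards [ae_tendsto_setAverage_ball μ hf, ae_tendsto_setAverage_ball μ hg]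
    with x hfx hgx
  refine tendsto_nhds_unique hfx (hgx.congr' ?_)
  filter_upwards [self_mem_nhdsWithin] with r (hr : 0 < r)
  rw [setAverage_eq, setAverage_eq, h x r hr]

theorem ae_tendsto_setAverage_ball_of_modulus {f : E → ℝ → ℝ} {g : E → ℝ} {ρ : ℝ → ℝ}
    (hρ : Tendsto ρ (𝓝[>] 0) (𝓝 0)) (hρ₀ : ∀ t, 0 ≤ t → 0 ≤ ρ t)
    (hf : ∀ v, Integrable (f · v) μ) (hg : Integrable g μ)
    (hmod : ∀ᵐ x ∂μ, ∀ u w, |f x u - f x w| ≤ g x * ρ |u - w|) :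
    ∀ᵐ x ∂μ, ∀ v, Tendsto (fun r => ⨍ y in ball x r, f y v ∂μ) (𝓝[>] 0) (𝓝 (f x v)) := by
  filter_upwards [hmod, ae_tendsto_setAverage_ball μ hg.locallyIntegrable,
    ae_all_iff.2 fun q : ℚ => ae_tendsto_setAverage_ball μ (hf q).locallyIntegrable]
    with x hx hgx hq v
  refine tendsto_of_tendsto_rat_of_abs_sub_le_mul (A := fun r v => ⨍ y in ball x r, f y v ∂μ)
    hρ hρ₀ hgx (fun r u w => ?_) hx hq v
  exact abs_average_sub_le_average_mul (hf u).restrict (hf w).restrict hg.restrict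
    (ae_restrict_of_ae (hmod.mono fun y hy => hy u w))

theorem ae_sub_eq_intervalIntegral_of_hasDerivAt_setIntegral_ball {F G : E → ℝ → ℝ}
    (hG : Measurable (Function.uncurry G)) {ω : ℝ → ℝ} {g : E → ℝ} (hg : Integrable g μ)
    (hg₀ : ∀ x, 0 ≤ g x) (hω : MonotoneOn ω (Ici 0)) {a b : ℝ}
    (hFa : Integrable (F · a) μ) (hFb : Integrable (F · b) μ) (hGa : Integrable (G · a) μ)
    (hmod : ∀ᵐ x ∂μ, ∀ u w, |G x u - G x w| ≤ g x * ω |u - w|)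
    (hderiv : ∀ x₀ r, 0 < r → ∀ v, HasDerivAt (fun v' => ∫ y in ball x₀ r, F y v' ∂μ)
      (∫ y in ball x₀ r, G y v ∂μ) v) :
    ∀ᵐ x ∂μ, F x b - F x a = ∫ t in a..b, G x t := by
  have hbound : ∀ᵐ x ∂μ, ∀ t ∈ Ι a b, |G x t| ≤ |G x a| + g x * ω |b - a| := by
    filter_upwards [hmod] with x hx t ht
    have hωt : ω |t - a| ≤ ω |b - a| :=
      hω (abs_nonneg (t - a)) (abs_nonneg (b - a))
        (abs_sub_left_of_mem_uIcc (uIoc_subset_uIcc ht))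
    calc |G x t| ≤ |G x a| + |G x t - G x a| := by
          linarith [abs_sub_abs_le_abs_sub (G x t) (G x a)]
      _ ≤ |G x a| + g x * ω |b - a| := by
        gcongr
        exact (hx t a).trans (mul_le_mul_of_nonneg_left hωt (hg₀ x))
  have hc : Integrable (fun x => |G x a| + g x * ω |b - a|) μ := hGa.abs.add (hg.mul_const _)
  refine ae_eq_of_forall_setIntegral_ball_eq μ (hFb.sub hFa).locallyIntegrable
    (integrable_intervalIntegral_of_integrable_uncurry
      (integrable_uncurry_uIoc_of_ae_bound hG hc hbound)).locallyIntegrable fun x r hr => ?_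
  rw [integral_sub hFb.integrableOn hFa.integrableOn,
    integral_intervalIntegral_eq_sub_of_hasDerivAt
      (integrable_uncurry_uIoc_of_ae_bound hG hc.restrict (ae_restrict_of_ae hbound))
      (fun t _ => hderiv x r hr t)]

end BallAverages

theorem stmt_18_general (n : ℕ)
    (F G : EuclideanSpace ℝ (Fin n) → ℝ → ℝ)
    (hGmeas : Measurable (Function.uncurry G))
    (g₁ g₂ : EuclideanSpace ℝ (Fin n) → ℝ)
    (hg₁ : Integrable g₁) (hg₂ : Integrable g₂)
    (hg₂nn : ∀ x, 0 ≤ g₂ x)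
    (ω : ℝ → ℝ)
    (hω_nonneg : ∀ t, 0 ≤ t → 0 ≤ ω t)
    (hω_mono : ∀ s t, 0 ≤ s → s ≤ t → ω s ≤ ω t)
    (hω_lim : Tendsto ω (nhdsWithin 0 (Set.Ioi 0)) (nhds 0))
    (ha : ∀ v : ℝ, Integrable (fun x => F x v) ∧ Integrable (fun x => G x v))
    (hb : ∀ᵐ x ∂(volume : Measure (EuclideanSpace ℝ (Fin n))), ∀ u w : ℝ,
      |F x u - F x w| ≤ g₁ x * |u - w| ∧ |G x u - G x w| ≤ g₂ x * ω |u - w|)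
    (hc : ∀ (x₀ : EuclideanSpace ℝ (Fin n)) (r : ℝ), 0 < r → ∀ v : ℝ,
      HasDerivAt (fun v' => ∫ y in Metric.ball x₀ r, F y v')
        (∫ y in Metric.ball x₀ r, G y v) v) :
    ∃ C : Set (EuclideanSpace ℝ (Fin n)), volume C = 0 ∧
      ∃ Ft Gt : EuclideanSpace ℝ (Fin n) → ℝ → ℝ,
        (∀ x ∉ C, ∀ v : ℝ,
          Tendsto (fun r : ℝ => (volume (Metric.ball x r)).toReal⁻¹ *
              ∫ y in Metric.ball x r, F y v)
            (nhdsWithin 0 (Set.Ioi 0)) (nhds (Ft x v)) ∧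
          Tendsto (fun r : ℝ => (volume (Metric.ball x r)).toReal⁻¹ *
              ∫ y in Metric.ball x r, G y v)
            (nhdsWithin 0 (Set.Ioi 0)) (nhds (Gt x v))) ∧
        (∀ x ∉ C, (∀ v : ℝ, HasDerivAt (Ft x) (Gt x v) v) ∧ Continuous (Gt x)) := by
  have hmodF := hb.mono fun x hx u w => (hx u w).1
  have hmodG := hb.mono fun x hx u w => (hx u w).2
  have hid : Tendsto id (𝓝[>] (0 : ℝ)) (𝓝 0) := tendsto_nhdsWithin_of_tendsto_nhds tendsto_id
  have hftc : ∀ᵐ x, ∀ q : ℚ, F x q - F x 0 = ∫ t in (0 : ℝ)..q, G x t :=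
    ae_all_iff.2 fun q => ae_sub_eq_intervalIntegral_of_hasDerivAt_setIntegral_ball volume
      hGmeas hg₂ hg₂nn (fun s hs t _ hst => hω_mono s t hs hst) (ha 0).1 (ha q).1 (ha 0).2
      hmodG hc
  have hae : ∀ᵐ x, (∀ v : ℝ,
      Tendsto (fun r : ℝ => ⨍ y in ball x r, F y v) (𝓝[>] 0) (𝓝 (F x v)) ∧
      Tendsto (fun r : ℝ => ⨍ y in ball x r, G y v) (𝓝[>] 0) (𝓝 (G x v))) ∧
      (∀ v : ℝ, HasDerivAt (F x) (G x v) v) ∧ Continuous (G x) := by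
    filter_upwards [ae_tendsto_setAverage_ball_of_modulus volume hid (fun _ ht => ht)
        (fun v => (ha v).1) hg₁ hmodF,
      ae_tendsto_setAverage_ball_of_modulus volume hω_lim hω_nonneg (fun v => (ha v).2) hg₂ hmodG,
      hmodF, hmodG, hftc] with x hFx hGx hFmod hGmod hftcx
    have hGcont := continuous_of_abs_sub_le_mul hω_lim hGmod
    exact ⟨fun v => ⟨hFx v, hGx v⟩, hasDerivAt_of_sub_eq_intervalIntegral_rat
      (continuous_of_abs_sub_le_mul hid hFmod) hGcont hftcx, hGcont⟩
  simp only [← measureReal_def, ← smul_eq_mul, ← setAverage_eq]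
  exact ⟨_, ae_iff.1 hae, F, G, fun x hx => (not_not.1 hx).1, fun x hx => (not_not.1 hx).2⟩

theorem stmt_18 (n : ℕ)
    (F G : EuclideanSpace ℝ (Fin n) → ℝ → ℝ)
    (hFmeas : Measurable (Function.uncurry F))
    (hGmeas : Measurable (Function.uncurry G))
    (g₁ g₂ : EuclideanSpace ℝ (Fin n) → ℝ)
    (hg₁ : Integrable g₁) (hg₂ : Integrable g₂)
    (hg₁nn : ∀ x, 0 ≤ g₁ x) (hg₂nn : ∀ x, 0 ≤ g₂ x)
    (ω : ℝ → ℝ)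
    (hω_nonneg : ∀ t, 0 ≤ t → 0 ≤ ω t)
    (hω_mono : ∀ s t, 0 ≤ s → s ≤ t → ω s ≤ ω t)
    (hω_lim : Tendsto ω (nhdsWithin 0 (Set.Ioi 0)) (nhds 0))
    (ha : ∀ v : ℝ, Integrable (fun x => F x v) ∧ Integrable (fun x => G x v))
    (hb : ∀ᵐ x ∂(volume : Measure (EuclideanSpace ℝ (Fin n))), ∀ u w : ℝ,
      |F x u - F x w| ≤ g₁ x * |u - w| ∧ |G x u - G x w| ≤ g₂ x * ω |u - w|)
    (hc : ∀ (x₀ : EuclideanSpace ℝ (Fin n)) (r : ℝ), 0 < r → ∀ v : ℝ,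
      HasDerivAt (fun v' => ∫ y in Metric.ball x₀ r, F y v')
        (∫ y in Metric.ball x₀ r, G y v) v) :
    ∃ C : Set (EuclideanSpace ℝ (Fin n)), volume C = 0 ∧
      ∃ Ft Gt : EuclideanSpace ℝ (Fin n) → ℝ → ℝ,
        (∀ x ∉ C, ∀ v : ℝ,
          Tendsto (fun r : ℝ => (volume (Metric.ball x r)).toReal⁻¹ *
              ∫ y in Metric.ball x r, F y v)
            (nhdsWithin 0 (Set.Ioi 0)) (nhds (Ft x v)) ∧
          Tendsto (fun r : ℝ => (volume (Metric.ball x r)).toReal⁻¹ *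
              ∫ y in Metric.ball x r, G y v)
            (nhdsWithin 0 (Set.Ioi 0)) (nhds (Gt x v))) ∧
        (∀ x ∉ C, (∀ v : ℝ, HasDerivAt (Ft x) (Gt x v) v) ∧ Continuous (Gt x)) :=
  stmt_18_general n F G hGmeas g₁ g₂ hg₁ hg₂ hg₂nn ω hω_nonneg hω_mono hω_lim ha hb hc
end
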